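/- Let B ≥ r > 0, θ > 0, R > 0, and let C = [0, θ] × [−R, R]. Suppose q : C → ℝ is continuous on C, C² in the interior of C, admits one-sided normal derivatives on the horizontal edges, and satisfies: Δq ≥ 0 in the interior of C; ∂q/∂x₂(x₁, R) ≤ 0 and ∂q/∂x₂(x₁, −R) ≥ 0 for all x₁ ∈ (0, θ); q(0, x₂) ≤ B and q(θ, x₂) ≤ r for all x₂ ∈ [−R, R]. Then for every (x₁, x₂) ∈ C, q(x₁, x₂) ≤ B + ((r − B)/θ) x₁. -/

import Mathlib

/-!
For `ε > 0` the function `w = u + ε (x₁² - x₂²/2)` satisfies `Δw = Δu + ε > 0`, and its outward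
normal derivative on the horizontal edges is at most `-εR < 0`. So the maximum of `w` over the
rectangle is neither interior (the second derivatives along both axes would be `≤ 0`) nor on a
horizontal edge (one-sided Fermat), hence it lies on a vertical edge; letting `ε → 0` bounds `u` by
its bound on the vertical edges. The theorem is this weak maximum principle applied to
`q - (B + ((r - B)/θ) x₁)`, since an affine function of `x₁` is harmonic and does not change the
normal derivatives on the horizontal edges.
-/

open Set

noncomputable section

/-- The Laplacian of a function of two real variables. -/
def lap2 (v : ℝ × ℝ → ℝ) (x : ℝ × ℝ) : ℝ :=
  fderiv ℝ (fun y => fderiv ℝ v y ((1 : ℝ), (0 : ℝ))) x (1, 0) +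
  fderiv ℝ (fun y => fderiv ℝ v y ((0 : ℝ), (1 : ℝ))) x (0, 1)

open Filter Topology

theorem IsLocalMaxOn.hasDerivWithinAt_Iic_nonneg {f : ℝ → ℝ} {b d : ℝ}
    (h : IsLocalMaxOn f (Iic b) b) (hd : HasDerivWithinAt f d (Iic b) b) : 0 ≤ d := by
  have hcone : (-1 : ℝ) ∈ posTangentConeAt (Iic b) b :=
    mem_posTangentConeAt_of_segment_subset
      ((convex_Iic b).segment_subset (mem_Iic.2 le_rfl) (by simp))
  simpa using h.hasFDerivWithinAt_nonpos hd.hasFDerivWithinAt hcone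

theorem IsLocalMaxOn.hasDerivWithinAt_Ici_nonpos {f : ℝ → ℝ} {a d : ℝ}
    (h : IsLocalMaxOn f (Ici a) a) (hd : HasDerivWithinAt f d (Ici a) a) : d ≤ 0 := by
  have hcone : (1 : ℝ) ∈ posTangentConeAt (Ici a) a :=
    mem_posTangentConeAt_of_segment_subset
      ((convex_Ici a).segment_subset (mem_Ici.2 le_rfl) (by simp))
  simpa using h.hasFDerivWithinAt_nonpos hd.hasFDerivWithinAt hcone

theorem IsLocalMax.deriv_deriv_nonpos {f : ℝ → ℝ} {a : ℝ} (h : IsLocalMax f a)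
    (hc : ContinuousAt f a) : deriv (deriv f) a ≤ 0 := by
  by_contra! hpos
  have hmin : IsLocalMin f a := isLocalMin_of_deriv_deriv_pos hpos h.deriv_eq_zero hc
  have hconst : f =ᶠ[𝓝 a] fun _ => f a := by
    filter_upwards [h, hmin] with y hmax hmin using le_antisymm hmax hmin
  have : deriv (deriv f) a = 0 := by
    rw [hconst.deriv.deriv_eq]
    simp
  linarith

section NormedSpace

variable {E : Type*} [NormedAddCommGroup E] [NormedSpace ℝ E]

theorem hasDerivAt_comp_add_smul {f : E → ℝ} {x v : E} {t : ℝ}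
    (hf : DifferentiableAt ℝ f (x + t • v)) :
    HasDerivAt (fun s : ℝ => f (x + s • v)) (fderiv ℝ f (x + t • v) v) t := by
  have hline : HasDerivAt (fun s : ℝ => x + s • v) v t := by
    simpa using ((hasDerivAt_id t).smul_const v).const_add x
  exact hf.hasFDerivAt.comp_hasDerivAt t hline

theorem ContDiffAt.differentiableAt_fderiv_apply {F : Type*} [NormedAddCommGroup F]
    [NormedSpace ℝ F] {f : E → F} {x : E} (hf : ContDiffAt ℝ 2 f x) (v : E) :
    DifferentiableAt ℝ (fun y => fderiv ℝ f y v) x :=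
  ((hf.fderiv_right (m := 1) le_rfl).differentiableAt (by simp)).clm_apply
    (differentiableAt_const v)

theorem IsLocalMax.fderiv_fderiv_apply_nonpos {f : E → ℝ} {x : E} (h : IsLocalMax f x)
    (hf : ContDiffAt ℝ 2 f x) (v : E) : fderiv ℝ (fun y => fderiv ℝ f y v) x v ≤ 0 := by
  have hline : Continuous fun t : ℝ => x + t • v := by fun_prop
  have hdiff : ∀ᶠ t in 𝓝 (0 : ℝ), DifferentiableAt ℝ f (x + t • v) := by
    have := (hf.eventually (by simp)).mono fun y hy => hy.differentiableAt (by simp)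
    exact hline.continuousAt.tendsto.eventually (by simpa using this)
  have hderiv : deriv (fun t : ℝ => f (x + t • v)) =ᶠ[𝓝 0] fun t => fderiv ℝ f (x + t • v) v :=
    hdiff.mono fun t ht => (hasDerivAt_comp_add_smul ht).deriv
  have hdv : DifferentiableAt ℝ (fun y => fderiv ℝ f y v) (x + (0 : ℝ) • v) := by
    simpa using hf.differentiableAt_fderiv_apply v
  have hmax : IsLocalMax (fun t : ℝ => f (x + t • v)) 0 :=
    IsLocalMax.comp_continuous (by simpa using h) hline.continuousAt
  calc fderiv ℝ (fun y => fderiv ℝ f y v) x v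
      = deriv (deriv fun t : ℝ => f (x + t • v)) 0 := by
        rw [hderiv.deriv_eq, (hasDerivAt_comp_add_smul hdv).deriv, zero_smul, add_zero]
    _ ≤ 0 := hmax.deriv_deriv_nonpos
        (hf.continuousAt.comp_of_eq hline.continuousAt (by simp))

theorem fderiv_fderiv_apply_add {F : Type*} [NormedAddCommGroup F] [NormedSpace ℝ F]
    {f g : E → F} {x : E} (hf : ContDiffAt ℝ 2 f x) (hg : ContDiffAt ℝ 2 g x) (v w : E) :
    fderiv ℝ (fun y => fderiv ℝ (fun z => f z + g z) y v) x w =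
      fderiv ℝ (fun y => fderiv ℝ f y v) x w + fderiv ℝ (fun y => fderiv ℝ g y v) x w := by
  have hsum : (fun y => fderiv ℝ (fun z => f z + g z) y v) =ᶠ[𝓝 x]
      fun y => fderiv ℝ f y v + fderiv ℝ g y v := by
    filter_upwards [hf.eventually (by simp), hg.eventually (by simp)] with y hfy hgy
    rw [fderiv_fun_add (hfy.differentiableAt (by simp)) (hgy.differentiableAt (by simp))]
    rfl
  rw [hsum.fderiv_eq, fderiv_fun_add (hf.differentiableAt_fderiv_apply v)
    (hg.differentiableAt_fderiv_apply v)]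
  rfl

end NormedSpace

theorem lap2_add {f g : ℝ × ℝ → ℝ} {x : ℝ × ℝ} (hf : ContDiffAt ℝ 2 f x)
    (hg : ContDiffAt ℝ 2 g x) : lap2 (fun y => f y + g y) x = lap2 f x + lap2 g x := by
  simp only [lap2, fderiv_fderiv_apply_add hf hg]
  ring

theorem lap2_quadratic (a b c : ℝ) (x : ℝ × ℝ) :
    lap2 (fun y => a * y.1 ^ 2 + b * y.2 ^ 2 + c * y.1) x = 2 * a + 2 * b := by
  simp (disch := fun_prop) only [lap2, fderiv_add_const, fderiv_fun_add, fderiv_const_mul,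
    fderiv_fun_pow, Nat.add_one_sub_one, pow_one, nsmul_eq_mul, Nat.cast_ofNat, fderiv_fst,
    fderiv_snd, add_apply, smul_apply, ContinuousLinearMap.coe_fst', smul_eq_mul, mul_one,
    ContinuousLinearMap.coe_snd', mul_zero, add_zero, zero_add]
  ring

theorem lap2_add_quadratic {f : ℝ × ℝ → ℝ} {x : ℝ × ℝ} (hf : ContDiffAt ℝ 2 f x) (a b c : ℝ) :
    lap2 (fun y => f y + (a * y.1 ^ 2 + b * y.2 ^ 2 + c * y.1)) x = lap2 f x + (2 * a + 2 * b) := by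
  rw [lap2_add hf (by fun_prop), lap2_quadratic]

theorem HasDerivWithinAt.add_quadratic_snd {f : ℝ × ℝ → ℝ} {x₁ t f' : ℝ} {s : Set ℝ}
    (hf : HasDerivWithinAt (fun t => f (x₁, t)) f' s t) (a b c : ℝ) :
    HasDerivWithinAt (fun t => f (x₁, t) + (a * x₁ ^ 2 + b * t ^ 2 + c * x₁))
      (f' + 2 * b * t) s t := by
  have hq : HasDerivAt (fun t : ℝ => a * x₁ ^ 2 + b * t ^ 2 + c * x₁) (2 * b * t) t := by
    refine (((hasDerivAt_const t (a * x₁ ^ 2)).add ((hasDerivAt_pow 2 t).const_mul b)).add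
      (hasDerivAt_const t (c * x₁))).congr_deriv ?_
    push_cast
    ring
  exact hf.add hq.hasDerivWithinAt

theorem IsLocalMax.lap2_nonpos {f : ℝ × ℝ → ℝ} {x : ℝ × ℝ} (h : IsLocalMax f x)
    (hf : ContDiffAt ℝ 2 f x) : lap2 f x ≤ 0 :=
  add_nonpos (h.fderiv_fderiv_apply_nonpos hf _) (h.fderiv_fderiv_apply_nonpos hf _)

theorem exists_isMaxOn_vertical_edge_of_lap2_pos {θ R : ℝ} (hR : 0 < R) {u : ℝ × ℝ → ℝ}
    (hcont : ContinuousOn u (Icc 0 θ ×ˢ Icc (-R) R))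
    (hC2 : ContDiffOn ℝ 2 u (Ioo 0 θ ×ˢ Ioo (-R) R))
    (hlap : ∀ x ∈ Ioo 0 θ ×ˢ Ioo (-R) R, 0 < lap2 u x)
    (htop : ∀ x₁ ∈ Ioo 0 θ, ∃ d < 0, HasDerivWithinAt (fun t => u (x₁, t)) d (Iic R) R)
    (hbot : ∀ x₁ ∈ Ioo 0 θ, ∃ d > 0, HasDerivWithinAt (fun t => u (x₁, t)) d (Ici (-R)) (-R))
    (hne : (Icc 0 θ ×ˢ Icc (-R) R).Nonempty) :
    ∃ p ∈ Icc 0 θ ×ˢ Icc (-R) R, (p.1 = 0 ∨ p.1 = θ) ∧ IsMaxOn u (Icc 0 θ ×ˢ Icc (-R) R) p := by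
  obtain ⟨p, hp, hmax⟩ := (isCompact_Icc.prod isCompact_Icc).exists_isMaxOn hne hcont
  refine ⟨p, hp, ?_, hmax⟩
  by_contra! hp₁
  have hx₁ : p.1 ∈ Ioo 0 θ := ⟨hp.1.1.lt_of_ne hp₁.1.symm, hp.1.2.lt_of_ne hp₁.2⟩
  have hslice : IsMaxOn (fun t => u (p.1, t)) (Icc (-R) R) p.2 := fun t ht => hmax ⟨hp.1, ht⟩
  rcases hp.2.2.eq_or_lt with hp₂_top | hp₂_lt
  · obtain ⟨d, hd, hderiv⟩ := htop p.1 hx₁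
    rw [hp₂_top] at hslice
    have hloc : IsLocalMaxOn (fun t => u (p.1, t)) (Iic R) R :=
      mem_of_superset (Icc_mem_nhdsLE (by linarith)) hslice
    exact hd.not_ge (hloc.hasDerivWithinAt_Iic_nonneg hderiv)
  rcases hp.2.1.eq_or_lt with hp₂_bot | hp₂_gt
  · obtain ⟨d, hd, hderiv⟩ := hbot p.1 hx₁
    rw [← hp₂_bot] at hslice
    have hloc : IsLocalMaxOn (fun t => u (p.1, t)) (Ici (-R)) (-R) :=
      mem_of_superset (Icc_mem_nhdsGE (by linarith)) hslice
    exact hd.not_ge (hloc.hasDerivWithinAt_Ici_nonpos hderiv)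
  have hopen : IsOpen (Ioo 0 θ ×ˢ Ioo (-R) R) := isOpen_Ioo.prod isOpen_Ioo
  have hint : p ∈ Ioo 0 θ ×ˢ Ioo (-R) R := ⟨hx₁, hp₂_gt, hp₂_lt⟩
  have hloc : IsLocalMax u p := hmax.isLocalMax <| mem_of_superset (hopen.mem_nhds hint)
    (prod_mono Ioo_subset_Icc_self Ioo_subset_Icc_self)
  exact (hlap p hint).not_ge (hloc.lap2_nonpos (hC2.contDiffAt (hopen.mem_nhds hint)))

theorem le_of_lap2_nonneg_of_vertical_edges_le {θ R M : ℝ} (hR : 0 < R) {u : ℝ × ℝ → ℝ}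
    (hcont : ContinuousOn u (Icc 0 θ ×ˢ Icc (-R) R))
    (hC2 : ContDiffOn ℝ 2 u (Ioo 0 θ ×ˢ Ioo (-R) R))
    (hlap : ∀ x ∈ Ioo 0 θ ×ˢ Ioo (-R) R, 0 ≤ lap2 u x)
    (htop : ∀ x₁ ∈ Ioo 0 θ, ∃ d ≤ 0, HasDerivWithinAt (fun t => u (x₁, t)) d (Iic R) R)
    (hbot : ∀ x₁ ∈ Ioo 0 θ, ∃ d ≥ 0, HasDerivWithinAt (fun t => u (x₁, t)) d (Ici (-R)) (-R))
    (hleft : ∀ x₂ ∈ Icc (-R) R, u (0, x₂) ≤ M) (hright : ∀ x₂ ∈ Icc (-R) R, u (θ, x₂) ≤ M) :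
    ∀ x ∈ Icc 0 θ ×ˢ Icc (-R) R, u x ≤ M := by
  intro x hx
  refine le_of_forall_pos_le_add fun δ hδ => ?_
  set ε := δ / (θ ^ 2 + R ^ 2)
  have hε : 0 < ε := by positivity
  let w : ℝ × ℝ → ℝ := fun y => u y + (ε * y.1 ^ 2 + -(ε / 2) * y.2 ^ 2 + 0 * y.1)
  obtain ⟨⟨p₁, p₂⟩, hp, hedge, hmax⟩ := exists_isMaxOn_vertical_edge_of_lap2_pos hR (u := w)
    (hcont.add (Continuous.continuousOn (by fun_prop)))
    (hC2.add (ContDiff.contDiffOn (by fun_prop)))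
    (fun y hy => by
      rw [lap2_add_quadratic (hC2.contDiffAt ((isOpen_Ioo.prod isOpen_Ioo).mem_nhds hy))]
      linarith [hlap y hy])
    (fun x₁ hx₁ => by
      obtain ⟨d, hd, hderiv⟩ := htop x₁ hx₁
      exact ⟨_, by nlinarith, hderiv.add_quadratic_snd _ _ _⟩)
    (fun x₁ hx₁ => by
      obtain ⟨d, hd, hderiv⟩ := hbot x₁ hx₁
      exact ⟨_, by nlinarith, hderiv.add_quadratic_snd _ _ _⟩)
    ⟨x, hx⟩
  have hup : u (p₁, p₂) ≤ M := by
    obtain rfl | rfl : p₁ = 0 ∨ p₁ = θ := hedge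
    exacts [hleft p₂ hp.2, hright p₂ hp.2]
  have hp₁ : p₁ ^ 2 ≤ θ ^ 2 := pow_le_pow_left₀ hp.1.1 hp.1.2 2
  have hx₂ : x.2 ^ 2 ≤ R ^ 2 := sq_le_sq' (by linarith [hx.2.1]) hx.2.2
  have hwx : w x ≤ w (p₁, p₂) := hmax hx
  have hεδ : ε * (θ ^ 2 + R ^ 2) = δ := div_mul_cancel₀ _ (by positivity)
  simp only [w] at hwx
  nlinarith [mul_nonneg hε.le (sq_nonneg x.1), mul_le_mul_of_nonneg_left hx₂ hε.le,
    mul_le_mul_of_nonneg_left hp₁ hε.le, mul_nonneg hε.le (sq_nonneg p₂),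
    mul_nonneg hε.le (sq_nonneg R)]

theorem linear_barrier_rectangle_general (B r θ R : ℝ)
    (hθ : 0 < θ) (hR : 0 < R)
    (q : ℝ × ℝ → ℝ)
    (hcont : ContinuousOn q (Icc 0 θ ×ˢ Icc (-R) R))
    (hC2 : ContDiffOn ℝ 2 q (Ioo 0 θ ×ˢ Ioo (-R) R))
    (hsub : ∀ x ∈ Ioo 0 θ ×ˢ Ioo (-R) R, 0 ≤ lap2 q x)
    (htop : ∀ x₁ ∈ Ioo 0 θ,
      DifferentiableWithinAt ℝ (fun t => q (x₁, t)) (Iic R) R ∧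
      derivWithin (fun t => q (x₁, t)) (Iic R) R ≤ 0)
    (hbot : ∀ x₁ ∈ Ioo 0 θ,
      DifferentiableWithinAt ℝ (fun t => q (x₁, t)) (Ici (-R)) (-R) ∧
      0 ≤ derivWithin (fun t => q (x₁, t)) (Ici (-R)) (-R))
    (hleft : ∀ x₂ ∈ Icc (-R) R, q (0, x₂) ≤ B)
    (hright : ∀ x₂ ∈ Icc (-R) R, q (θ, x₂) ≤ r) :
    ∀ x ∈ Icc 0 θ ×ˢ Icc (-R) R, q x ≤ B + ((r - B) / θ) * x.1 := by
  set s := (r - B) / θ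
  have hsθ : s * θ = r - B := div_mul_cancel₀ _ hθ.ne'
  have key := le_of_lap2_nonneg_of_vertical_edges_le hR (M := B)
    (u := fun y => q y + (0 * y.1 ^ 2 + 0 * y.2 ^ 2 + -s * y.1))
    (hcont.add (Continuous.continuousOn (by fun_prop)))
    (hC2.add (ContDiff.contDiffOn (by fun_prop)))
    (fun y hy => by
      rw [lap2_add_quadratic (hC2.contDiffAt ((isOpen_Ioo.prod isOpen_Ioo).mem_nhds hy))]
      linarith [hsub y hy])
    (fun x₁ hx₁ => ⟨_, by linarith [(htop x₁ hx₁).2],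
      (htop x₁ hx₁).1.hasDerivWithinAt.add_quadratic_snd _ _ _⟩)
    (fun x₁ hx₁ => ⟨_, by linarith [(hbot x₁ hx₁).2],
      (hbot x₁ hx₁).1.hasDerivWithinAt.add_quadratic_snd _ _ _⟩)
    (fun x₂ hx₂ => by linarith [hleft x₂ hx₂])
    (fun x₂ hx₂ => by linarith [hright x₂ hx₂])
  intro x hx
  linarith [key x hx]

/-- Linear barrier on the rectangle `C = [0, θ] × [−R, R]`:
if `Δq ≥ 0` in the interior, the outward normal derivative of `q` is nonpositive
on the two horizontal edges, `q ≤ B` on the left edge and `q ≤ r` on the right edge,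
then `q(x₁,x₂) ≤ B + ((r − B)/θ)x₁` on `C`. -/
theorem linear_barrier_rectangle (B r θ R : ℝ)
    (hBr : r ≤ B) (hr : 0 < r) (hθ : 0 < θ) (hR : 0 < R)
    (q : ℝ × ℝ → ℝ)
    (hcont : ContinuousOn q (Icc 0 θ ×ˢ Icc (-R) R))
    (hC2 : ContDiffOn ℝ 2 q (Ioo 0 θ ×ˢ Ioo (-R) R))
    (hsub : ∀ x ∈ Ioo 0 θ ×ˢ Ioo (-R) R, 0 ≤ lap2 q x)
    (htop : ∀ x₁ ∈ Ioo 0 θ,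
      DifferentiableWithinAt ℝ (fun t => q (x₁, t)) (Iic R) R ∧
      derivWithin (fun t => q (x₁, t)) (Iic R) R ≤ 0)
    (hbot : ∀ x₁ ∈ Ioo 0 θ,
      DifferentiableWithinAt ℝ (fun t => q (x₁, t)) (Ici (-R)) (-R) ∧
      0 ≤ derivWithin (fun t => q (x₁, t)) (Ici (-R)) (-R))
    (hleft : ∀ x₂ ∈ Icc (-R) R, q (0, x₂) ≤ B)
    (hright : ∀ x₂ ∈ Icc (-R) R, q (θ, x₂) ≤ r) :
    ∀ x ∈ Icc 0 θ ×ˢ Icc (-R) R, q x ≤ B + ((r - B) / θ) * x.1 :=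
  linear_barrier_rectangle_general B r θ R hθ hR q hcont hC2 hsub htop hbot hleft hright
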